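/- Convergence of C-BP dual certificates for fixed λ: Fix λ > 0 and y ∈ L²(T). Let q_λ^n be the projection of y/λ onto D^n (the unique solution of the dual of the thin-grid C-BP Q_λ^n(y)) and q_λ^∞ the projection of y/λ onto D^∞ (the unique solution of the dual of the positive Beurling lasso Q_λ^∞(y)), and set μ_λ^n = Φ^* q_λ^n, μ_λ^∞ = Φ^* q_λ^∞. Then q_λ^n → q_λ^∞ strongly in L²(T), and for every k ∈ ℕ the k-th derivatives (μ_λ^n)^{(k)} converge uniformly on T to (μ_λ^∞)^{(k)}. -/

import Mathlib

open MeasureTheory Filter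
open scoped BigOperators
noncomputable section

/-- `p` belongs to `L²(T)` (torus represented by `1`-periodic functions on `ℝ`). -/
def MemL2T (p : ℝ → ℝ) : Prop :=
  Measurable p ∧ Function.Periodic p 1 ∧
    IntegrableOn (fun x => (p x)^2) (Set.Ioc (0:ℝ) 1)

/-- The adjoint operator `Φ^* q : y ↦ ∫_T φ(x,y) q(x) dx`. -/
def PhiStar (φ : ℝ → ℝ → ℝ) (q : ℝ → ℝ) : ℝ → ℝ :=
  fun t => ∫ x in Set.Ioc (0:ℝ) 1, φ x t * q x

/-- Membership in the dual feasible set `D^n` of the thin-grid C-BP. -/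
def InDn (φ : ℝ → ℝ → ℝ) (P : ℕ → ℕ) (n : ℕ) (q : ℝ → ℝ) : Prop :=
  ∀ i : Fin (P n), PhiStar φ q ((i : ℝ) * (1 / (P n : ℝ)))
    + ((1 / (P n : ℝ)) / 2) * |deriv (PhiStar φ q) ((i : ℝ) * (1 / (P n : ℝ)))| ≤ 1

/-- Membership in the dual feasible set `D^∞` of the positive Beurling lasso. -/
def InDinf (φ : ℝ → ℝ → ℝ) (q : ℝ → ℝ) : Prop :=
  ∀ t : ℝ, PhiStar φ q t ≤ 1

namespace CBPaux

/-- square-integrable on the unit interval -/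
def S (f : ℝ → ℝ) : Prop :=
  Measurable f ∧ IntegrableOn (fun x => (f x)^2) (Set.Ioc (0:ℝ) 1)

def II (f g : ℝ → ℝ) : ℝ := ∫ x in Set.Ioc (0:ℝ) 1, f x * g x
def NN (f : ℝ → ℝ) : ℝ := ∫ x in Set.Ioc (0:ℝ) 1, (f x)^2
def nrm (f : ℝ → ℝ) : ℝ := Real.sqrt (NN f)

lemma S.meas {f} (h : S f) : Measurable f := h.1
lemma S.sq_int {f} (h : S f) : IntegrableOn (fun x => (f x)^2) (Set.Ioc (0:ℝ) 1) := h.2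

lemma S.int {f} (h : S f) : IntegrableOn f (Set.Ioc (0:ℝ) 1) := by
  refine Integrable.mono' (g := fun x => ((f x)^2 + 1)/2) ?_ h.1.aestronglyMeasurable ?_
  · exact (h.2.add (integrableOn_const (by simp) (by simp))).div_const 2
  · refine Filter.Eventually.of_forall (fun x => ?_)
    have := sq_nonneg (|f x| - 1)
    rw [Real.norm_eq_abs]
    nlinarith [sq_abs (f x), abs_nonneg (f x)]

lemma S.mul_int {f g} (hf : S f) (hg : S g) :
    IntegrableOn (fun x => f x * g x) (Set.Ioc (0:ℝ) 1) := by
  refine Integrable.mono' (g := fun x => ((f x)^2 + (g x)^2)/2) ?_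
    (hf.1.mul hg.1).aestronglyMeasurable ?_
  · exact (hf.2.add hg.2).div_const 2
  · refine Filter.Eventually.of_forall (fun x => ?_)
    rw [Real.norm_eq_abs, abs_mul]
    nlinarith [sq_nonneg (|f x| - |g x|), sq_abs (f x), sq_abs (g x), abs_nonneg (f x), abs_nonneg (g x)]

lemma S.add {f g} (hf : S f) (hg : S g) : S (fun x => f x + g x) := by
  refine ⟨hf.1.add hg.1, ?_⟩
  have : (fun x => (f x + g x)^2) = fun x => (f x)^2 + 2*(f x * g x) + (g x)^2 := by
    funext x; ring
  rw [this]
  exact (hf.2.add ((hf.mul_int hg).const_mul 2)).add hg.2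

lemma S.smul {f} (c : ℝ) (hf : S f) : S (fun x => c * f x) := by
  refine ⟨hf.1.const_mul c, ?_⟩
  have : (fun x => (c * f x)^2) = fun x => c^2 * (f x)^2 := by funext x; ring
  rw [this]; exact hf.2.const_mul _

lemma S.sub {f g} (hf : S f) (hg : S g) : S (fun x => f x - g x) := by
  have := hf.add (hg.smul (-1))
  simpa [sub_eq_add_neg] using this

lemma S.zero : S (fun _ : ℝ => (0:ℝ)) := by
  refine ⟨measurable_const, ?_⟩
  have : (fun x : ℝ => ((0:ℝ))^2) = fun _ : ℝ => (0:ℝ) := by funext x; ring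
  rw [this]
  exact integrableOn_zero

lemma NN_nonneg (f : ℝ → ℝ) : 0 ≤ NN f :=
  integral_nonneg (fun x => sq_nonneg _)

lemma nrm_nonneg (f : ℝ → ℝ) : 0 ≤ nrm f := Real.sqrt_nonneg _

lemma nrm_sq {f : ℝ → ℝ} : nrm f ^ 2 = NN f := Real.sq_sqrt (NN_nonneg f)

lemma NN_smul (c : ℝ) (f : ℝ → ℝ) : NN (fun x => c * f x) = c^2 * NN f := by
  unfold NN
  rw [← integral_const_mul]
  congr 1; funext x; ring

lemma nrm_smul (c : ℝ) (f : ℝ → ℝ) : nrm (fun x => c * f x) = |c| * nrm f := by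
  unfold nrm
  rw [NN_smul, Real.sqrt_mul (sq_nonneg c), Real.sqrt_sq_eq_abs]

lemma NN_add {f g} (hf : S f) (hg : S g) :
    NN (fun x => f x + g x) = NN f + 2 * II f g + NN g := by
  unfold NN II
  have : (fun x => (f x + g x)^2) = fun x => ((f x)^2 + 2*(f x * g x)) + (g x)^2 := by
    funext x; ring
  have h1 : IntegrableOn (fun x => (f x)^2 + 2*(f x * g x)) (Set.Ioc (0:ℝ) 1) :=
    hf.2.add ((hf.mul_int hg).const_mul 2)
  have h2 : IntegrableOn (fun x => 2*(f x * g x)) (Set.Ioc (0:ℝ) 1) :=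
    (hf.mul_int hg).const_mul 2
  rw [this, integral_add h1 hg.2, integral_add hf.2 h2, integral_const_mul]

lemma II_smul_right {f g} (c : ℝ) : II f (fun x => c * g x) = c * II f g := by
  unfold II
  rw [← integral_const_mul]
  congr 1; funext x; ring

lemma NN_sub {f g} (hf : S f) (hg : S g) :
    NN (fun x => f x - g x) = NN f - 2 * II f g + NN g := by
  have h := NN_add hf (hg.smul (-1))
  have e1 : (fun x => f x + -1 * g x) = (fun x => f x - g x) := by funext x; ring
  rw [e1] at h
  rw [h, II_smul_right, NN_smul]
  ring

lemma CS {f g} (hf : S f) (hg : S g) : II f g ≤ nrm f * nrm g := by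
  rcases le_or_gt (NN g) 0 with hgle | hgpos
  · have hg0 : NN g = 0 := le_antisymm hgle (NN_nonneg g)
    -- for all t > 0 : 0 ≤ NN f - 2 t II f g
    have key : ∀ t : ℝ, 0 ≤ NN f - 2*t*(II f g) := by
      intro t
      have h0 : 0 ≤ NN (fun x => f x - t * g x) := NN_nonneg _
      rw [NN_sub hf (hg.smul t), II_smul_right, NN_smul, hg0] at h0
      nlinarith
    have : II f g ≤ 0 := by
      by_contra h
      push_neg at h
      have := key ((NN f + 1)/(2 * II f g))
      have h2 : 2 * ((NN f + 1)/(2 * II f g)) * II f g = NN f + 1 := by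
        field_simp
      nlinarith
    exact this.trans (mul_nonneg (nrm_nonneg f) (nrm_nonneg g))
  · have h0 : 0 ≤ NN (fun x => f x - (II f g / NN g) * g x) := NN_nonneg _
    rw [NN_sub hf (hg.smul _), II_smul_right, NN_smul] at h0
    have hne : NN g ≠ 0 := ne_of_gt hgpos
    have e1 : II f g / NN g * II f g = (II f g)^2 / NN g := by field_simp
    have e2 : (II f g / NN g)^2 * NN g = (II f g)^2 / NN g := by field_simp
    rw [e1, e2] at h0
    have hd : (II f g)^2 / NN g ≤ NN f := by linarith
    have key : (II f g)^2 ≤ NN f * NN g := (div_le_iff₀ hgpos).1 hd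
    have h1 : II f g ≤ |II f g| := le_abs_self _
    refine h1.trans ?_
    have habs : |II f g| = Real.sqrt ((II f g)^2) := (Real.sqrt_sq_eq_abs _).symm
    have hsq : (nrm f * nrm g)^2 = NN f * NN g := by
      rw [mul_pow, nrm_sq, nrm_sq]
    rw [habs]
    calc Real.sqrt ((II f g)^2) ≤ Real.sqrt ((nrm f * nrm g)^2) :=
          Real.sqrt_le_sqrt (by rw [hsq]; exact key)
    _ = |nrm f * nrm g| := Real.sqrt_sq_eq_abs _
    _ = nrm f * nrm g := abs_of_nonneg (mul_nonneg (nrm_nonneg f) (nrm_nonneg g))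

lemma nrm_add_le {f g} (hf : S f) (hg : S g) :
    nrm (fun x => f x + g x) ≤ nrm f + nrm g := by
  have h : NN (fun x => f x + g x) ≤ (nrm f + nrm g)^2 := by
    rw [NN_add hf hg]
    have := CS hf hg
    have e1 := nrm_sq (f := f); have e2 := nrm_sq (f := g)
    nlinarith
  unfold nrm
  calc Real.sqrt (NN fun x => f x + g x) ≤ Real.sqrt ((nrm f + nrm g)^2) := Real.sqrt_le_sqrt h
  _ = |nrm f + nrm g| := Real.sqrt_sq_eq_abs _
  _ = _ := abs_of_nonneg (add_nonneg (nrm_nonneg f) (nrm_nonneg g))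

lemma nrm_mono {f g} (h : NN f ≤ NN g) : nrm f ≤ nrm g := Real.sqrt_le_sqrt h

lemma l1_le_l2 {f} (hf : S f) : (∫ x in Set.Ioc (0:ℝ) 1, |f x|) ≤ nrm f := by
  set t := ∫ x in Set.Ioc (0:ℝ) 1, |f x| with ht
  have htnn : 0 ≤ t := integral_nonneg (fun x => abs_nonneg _)
  have habs : S (fun x => |f x|) := ⟨hf.1.abs, by simpa [sq_abs] using hf.2⟩
  have hconst : S (fun _ : ℝ => t) := ⟨measurable_const, integrableOn_const (by simp) (by simp)⟩
  have h0 : 0 ≤ NN (fun x => |f x| - t) := NN_nonneg _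
  have hNabs : NN (fun x => |f x|) = NN f := by
    unfold NN; congr 1; funext x; exact sq_abs _
  have hIc : II (fun x => |f x|) (fun _ => t) = t * t := by
    unfold II
    rw [show (fun x => |f x| * t) = fun x => t * |f x| by funext x; ring, integral_const_mul]
  have hNc : NN (fun _ : ℝ => t) = t^2 := by
    unfold NN
    rw [setIntegral_const]
    simp [Real.volume_Ioc]
  rw [NN_sub habs hconst, hNabs, hIc, hNc] at h0
  have : t^2 ≤ NN f := by nlinarith
  calc t = Real.sqrt (t^2) := by rw [Real.sqrt_sq htnn]
  _ ≤ nrm f := Real.sqrt_le_sqrt this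


/-- iterated partial derivative of `φ` in the second variable, as a joint function -/
def Fk (φ : ℝ → ℝ → ℝ) : ℕ → ℝ × ℝ → ℝ
  | 0 => fun p => φ p.1 p.2
  | (k+1) => fun p => fderiv ℝ (Fk φ k) p (0,1)

variable {φ : ℝ → ℝ → ℝ}

lemma Fk_smooth (hφ : ContDiff ℝ (⊤ : ℕ∞) (fun p : ℝ × ℝ => φ p.1 p.2)) :
    ∀ k, ContDiff ℝ (⊤ : ℕ∞) (Fk φ k) := by
  intro k
  induction k with
  | zero => exact hφ
  | succ k ih =>
      exact (ih.fderiv_right (by simp)).clm_apply contDiff_const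

lemma Fk_hasDerivAt (hφ : ContDiff ℝ (⊤ : ℕ∞) (fun p : ℝ × ℝ => φ p.1 p.2)) (k : ℕ) (x t : ℝ) :
    HasDerivAt (fun s => Fk φ k (x, s)) (Fk φ (k+1) (x, t)) t := by
  have hF : HasFDerivAt (Fk φ k) (fderiv ℝ (Fk φ k) (x, t)) (x, t) :=
    (((Fk_smooth hφ k).differentiable (by simp)) (x, t)).hasFDerivAt
  have hc : HasDerivAt (fun s : ℝ => ((x : ℝ), s)) ((0 : ℝ), (1 : ℝ)) t := by
    simpa using (hasDerivAt_const t x).prodMk (hasDerivAt_id t)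
  exact hF.comp_hasDerivAt t hc

lemma Fk_deriv_eq (hφ : ContDiff ℝ (⊤ : ℕ∞) (fun p : ℝ × ℝ => φ p.1 p.2)) (k : ℕ) (x t : ℝ) :
    Fk φ (k+1) (x, t) = deriv (fun s => Fk φ k (x, s)) t :=
  (Fk_hasDerivAt hφ k x t).deriv.symm

lemma Fk_per₂ (hφ : ContDiff ℝ (⊤ : ℕ∞) (fun p : ℝ × ℝ => φ p.1 p.2))
    (hper : ∀ x : ℝ, Function.Periodic (fun t => φ x t) 1) (k : ℕ) (x : ℝ) :
    Function.Periodic (fun t => Fk φ k (x, t)) 1 := by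
  induction k with
  | zero => exact hper x
  | succ k ih =>
      intro t
      have h1 : Fk φ (k+1) (x, t + 1) = deriv (fun s => Fk φ k (x, s)) (t + 1) :=
        Fk_deriv_eq hφ k x (t+1)
      have h2 : Fk φ (k+1) (x, t) = deriv (fun s => Fk φ k (x, s)) t :=
        Fk_deriv_eq hφ k x t
      have h3 : deriv (fun s => Fk φ k (x, s)) (t + 1)
          = deriv (fun s => Fk φ k (x, s + 1)) t :=
        (deriv_comp_add_const (fun s => Fk φ k (x, s)) 1 t).symm
      have h4 : (fun s => Fk φ k (x, s + 1)) = (fun s => Fk φ k (x, s)) := by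
        funext s; exact ih s
      simp only [h1, h2, h3, h4]

lemma Fk_per₁ (hφ : ContDiff ℝ (⊤ : ℕ∞) (fun p : ℝ × ℝ => φ p.1 p.2))
    (hper : ∀ t : ℝ, Function.Periodic (fun x => φ x t) 1) (k : ℕ) (t : ℝ) :
    Function.Periodic (fun x => Fk φ k (x, t)) 1 := by
  induction k generalizing t with
  | zero => exact hper t
  | succ k ih =>
      intro x
      have h1 : Fk φ (k+1) (x + 1, t) = deriv (fun s => Fk φ k (x + 1, s)) t :=
        Fk_deriv_eq hφ k (x+1) t
      have h2 : Fk φ (k+1) (x, t) = deriv (fun s => Fk φ k (x, s)) t :=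
        Fk_deriv_eq hφ k x t
      have h4 : (fun s => Fk φ k (x + 1, s)) = (fun s => Fk φ k (x, s)) := by
        funext s; exact ih s x
      simp only [h1, h2, h4]

lemma Fk_bound (hφ : ContDiff ℝ (⊤ : ℕ∞) (fun p : ℝ × ℝ => φ p.1 p.2))
    (hper₁ : ∀ t : ℝ, Function.Periodic (fun x => φ x t) 1)
    (hper₂ : ∀ x : ℝ, Function.Periodic (fun t => φ x t) 1) (k : ℕ) :
    ∃ C : ℝ, 0 ≤ C ∧ ∀ x t : ℝ, |Fk φ k (x, t)| ≤ C := by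
  obtain ⟨C, hC⟩ := (isCompact_Icc.prod isCompact_Icc :
      IsCompact ((Set.Icc (0:ℝ) 1) ×ˢ (Set.Icc (0:ℝ) 1))).exists_bound_of_continuousOn
    ((Fk_smooth hφ k).continuous.continuousOn)
  refine ⟨max C 0, le_max_right _ _, fun x t => ?_⟩
  have hx : Fk φ k (x, t) = Fk φ k (Int.fract x, Int.fract t) := by
    have ex : x - (⌊x⌋ : ℤ) • (1:ℝ) = Int.fract x := by
      rw [Int.fract]; push_cast [zsmul_eq_mul]; ring
    have et : t - (⌊t⌋ : ℤ) • (1:ℝ) = Int.fract t := by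
      rw [Int.fract]; push_cast [zsmul_eq_mul]; ring
    have p1 := (Fk_per₁ hφ hper₁ k t).sub_zsmul_eq (x := x) ⌊x⌋
    have p2 := (Fk_per₂ hφ hper₂ k (Int.fract x)).sub_zsmul_eq (x := t) ⌊t⌋
    rw [ex] at p1
    rw [et] at p2
    
    rw [← p1, ← p2]
  rw [hx]
  have hmem : (Int.fract x, Int.fract t) ∈ (Set.Icc (0:ℝ) 1) ×ˢ (Set.Icc (0:ℝ) 1) := by
    constructor <;> exact ⟨Int.fract_nonneg _, (Int.fract_lt_one _).le⟩
  calc |Fk φ k (Int.fract x, Int.fract t)|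
      = ‖Fk φ k (Int.fract x, Int.fract t)‖ := rfl
    _ ≤ C := hC _ hmem
    _ ≤ max C 0 := le_max_left _ _


/-! ### Differentiation under the integral sign -/

section Deriv

variable (hφ : ContDiff ℝ (⊤ : ℕ∞) (fun p : ℝ × ℝ => φ p.1 p.2))
variable (hper₁ : ∀ t : ℝ, Function.Periodic (fun x => φ x t) 1)
variable (hper₂ : ∀ x : ℝ, Function.Periodic (fun t => φ x t) 1)
variable {q : ℝ → ℝ}

lemma cont_slice (hφ : ContDiff ℝ (⊤ : ℕ∞) (fun p : ℝ × ℝ => φ p.1 p.2)) (k : ℕ) (t : ℝ) :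
    Continuous (fun x => Fk φ k (x, t)) :=
  (Fk_smooth hφ k).continuous.comp (continuous_id.prodMk continuous_const)

lemma int_slice (hφ : ContDiff ℝ (⊤ : ℕ∞) (fun p : ℝ × ℝ => φ p.1 p.2))
    (hper₁ : ∀ t : ℝ, Function.Periodic (fun x => φ x t) 1)
    (hper₂ : ∀ x : ℝ, Function.Periodic (fun t => φ x t) 1)
    (hq : S q) (k : ℕ) (t : ℝ) :
    IntegrableOn (fun x => Fk φ k (x, t) * q x) (Set.Ioc (0:ℝ) 1) := by
  obtain ⟨C, hC0, hC⟩ := Fk_bound hφ hper₁ hper₂ k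
  exact hq.int.bdd_mul (cont_slice hφ k t).aestronglyMeasurable
    (Filter.Eventually.of_forall (fun x => hC x t))

lemma hasDerivAt_int (hφ : ContDiff ℝ (⊤ : ℕ∞) (fun p : ℝ × ℝ => φ p.1 p.2))
    (hper₁ : ∀ t : ℝ, Function.Periodic (fun x => φ x t) 1)
    (hper₂ : ∀ x : ℝ, Function.Periodic (fun t => φ x t) 1)
    (hq : S q) (k : ℕ) (t₀ : ℝ) :
    HasDerivAt (fun t => ∫ x in Set.Ioc (0:ℝ) 1, Fk φ k (x, t) * q x)
      (∫ x in Set.Ioc (0:ℝ) 1, Fk φ (k+1) (x, t₀) * q x) t₀ := by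
  obtain ⟨C, hC0, hC⟩ := Fk_bound hφ hper₁ hper₂ (k+1)
  have key := hasDerivAt_integral_of_dominated_loc_of_deriv_le
    (μ := volume.restrict (Set.Ioc (0:ℝ) 1))
    (F := fun t x => Fk φ k (x, t) * q x)
    (F' := fun t x => Fk φ (k+1) (x, t) * q x)
    (x₀ := t₀) (s := Metric.ball t₀ 1) (bound := fun x => C * |q x|)
    (Metric.ball_mem_nhds t₀ one_pos)
    (Filter.Eventually.of_forall (fun t =>
      ((cont_slice hφ k t).aestronglyMeasurable.mul hq.meas.aestronglyMeasurable)))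
    (int_slice hφ hper₁ hper₂ hq k t₀)
    ((cont_slice hφ (k+1) t₀).aestronglyMeasurable.mul hq.meas.aestronglyMeasurable)
    (Filter.Eventually.of_forall (fun x t _ => by
      rw [Real.norm_eq_abs, abs_mul]
      exact mul_le_mul_of_nonneg_right (hC x t) (abs_nonneg _)))
    (hq.int.abs.const_mul C)
    (Filter.Eventually.of_forall (fun x t _ => (Fk_hasDerivAt hφ k x t).mul_const (q x)))
  exact key.2

lemma phiStar_iter (hφ : ContDiff ℝ (⊤ : ℕ∞) (fun p : ℝ × ℝ => φ p.1 p.2))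
    (hper₁ : ∀ t : ℝ, Function.Periodic (fun x => φ x t) 1)
    (hper₂ : ∀ x : ℝ, Function.Periodic (fun t => φ x t) 1)
    (hq : S q) (k : ℕ) :
    iteratedDeriv k (PhiStar φ q) = fun t => ∫ x in Set.Ioc (0:ℝ) 1, Fk φ k (x, t) * q x := by
  induction k with
  | zero => rw [iteratedDeriv_zero]; rfl
  | succ k ih =>
      rw [iteratedDeriv_succ, ih]
      funext t
      exact (hasDerivAt_int hφ hper₁ hper₂ hq k t).deriv

lemma phiStar_deriv (hφ : ContDiff ℝ (⊤ : ℕ∞) (fun p : ℝ × ℝ => φ p.1 p.2))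
    (hper₁ : ∀ t : ℝ, Function.Periodic (fun x => φ x t) 1)
    (hper₂ : ∀ x : ℝ, Function.Periodic (fun t => φ x t) 1)
    (hq : S q) :
    deriv (PhiStar φ q) = fun t => ∫ x in Set.Ioc (0:ℝ) 1, Fk φ 1 (x, t) * q x := by
  rw [← iteratedDeriv_one]
  exact phiStar_iter hφ hper₁ hper₂ hq 1

lemma int_comb (hφ : ContDiff ℝ (⊤ : ℕ∞) (fun p : ℝ × ℝ => φ p.1 p.2))
    (hper₁ : ∀ t : ℝ, Function.Periodic (fun x => φ x t) 1)
    (hper₂ : ∀ x : ℝ, Function.Periodic (fun t => φ x t) 1)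
    {q1 q2 : ℝ → ℝ} (hq1 : S q1) (hq2 : S q2) (a b : ℝ) (k : ℕ) (t : ℝ) :
    (∫ x in Set.Ioc (0:ℝ) 1, Fk φ k (x, t) * (a * q1 x + b * q2 x))
      = a * (∫ x in Set.Ioc (0:ℝ) 1, Fk φ k (x, t) * q1 x)
        + b * (∫ x in Set.Ioc (0:ℝ) 1, Fk φ k (x, t) * q2 x) := by
  have h1 : IntegrableOn (fun x => a * (Fk φ k (x, t) * q1 x)) (Set.Ioc (0:ℝ) 1) :=
    (int_slice hφ hper₁ hper₂ hq1 k t).const_mul a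
  have h2 : IntegrableOn (fun x => b * (Fk φ k (x, t) * q2 x)) (Set.Ioc (0:ℝ) 1) :=
    (int_slice hφ hper₁ hper₂ hq2 k t).const_mul b
  rw [show (fun x => Fk φ k (x, t) * (a * q1 x + b * q2 x))
      = fun x => a * (Fk φ k (x, t) * q1 x) + b * (Fk φ k (x, t) * q2 x) from
      funext fun x => by ring]
  rw [integral_add h1 h2, integral_const_mul, integral_const_mul]

lemma phiStar_eq_int (q : ℝ → ℝ) :
    PhiStar φ q = fun t => ∫ x in Set.Ioc (0:ℝ) 1, Fk φ 0 (x, t) * q x := rfl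

lemma phiStar_comb (hφ : ContDiff ℝ (⊤ : ℕ∞) (fun p : ℝ × ℝ => φ p.1 p.2))
    (hper₁ : ∀ t : ℝ, Function.Periodic (fun x => φ x t) 1)
    (hper₂ : ∀ x : ℝ, Function.Periodic (fun t => φ x t) 1)
    {q1 q2 : ℝ → ℝ} (hq1 : S q1) (hq2 : S q2) (a b : ℝ) (t : ℝ) :
    PhiStar φ (fun x => a * q1 x + b * q2 x) t
      = a * PhiStar φ q1 t + b * PhiStar φ q2 t :=
  int_comb hφ hper₁ hper₂ hq1 hq2 a b 0 t

lemma phiStar_deriv_comb (hφ : ContDiff ℝ (⊤ : ℕ∞) (fun p : ℝ × ℝ => φ p.1 p.2))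
    (hper₁ : ∀ t : ℝ, Function.Periodic (fun x => φ x t) 1)
    (hper₂ : ∀ x : ℝ, Function.Periodic (fun t => φ x t) 1)
    {q1 q2 : ℝ → ℝ} (hq1 : S q1) (hq2 : S q2) (a b : ℝ) (t : ℝ) :
    deriv (PhiStar φ (fun x => a * q1 x + b * q2 x)) t
      = a * deriv (PhiStar φ q1) t + b * deriv (PhiStar φ q2) t := by
  rw [phiStar_deriv hφ hper₁ hper₂ ((hq1.smul a).add (hq2.smul b)),
    phiStar_deriv hφ hper₁ hper₂ hq1, phiStar_deriv hφ hper₁ hper₂ hq2]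
  exact int_comb hφ hper₁ hper₂ hq1 hq2 a b 1 t

lemma int_abs_bound (hφ : ContDiff ℝ (⊤ : ℕ∞) (fun p : ℝ × ℝ => φ p.1 p.2))
    (hper₁ : ∀ t : ℝ, Function.Periodic (fun x => φ x t) 1)
    (hper₂ : ∀ x : ℝ, Function.Periodic (fun t => φ x t) 1)
    {q : ℝ → ℝ} (hq : S q) {k : ℕ} {C : ℝ} (hC0 : 0 ≤ C)
    (hC : ∀ x t : ℝ, |Fk φ k (x, t)| ≤ C) (t : ℝ) :
    |∫ x in Set.Ioc (0:ℝ) 1, Fk φ k (x, t) * q x| ≤ C * nrm q := by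
  have h1 : |∫ x in Set.Ioc (0:ℝ) 1, Fk φ k (x, t) * q x|
      ≤ ∫ x in Set.Ioc (0:ℝ) 1, |Fk φ k (x, t)| * |q x| := by
    simpa [Real.norm_eq_abs, abs_mul] using
      norm_integral_le_integral_norm (μ := volume.restrict (Set.Ioc (0:ℝ) 1))
        (f := fun x => Fk φ k (x, t) * q x)
  have h2 : (∫ x in Set.Ioc (0:ℝ) 1, |Fk φ k (x, t)| * |q x|)
      ≤ ∫ x in Set.Ioc (0:ℝ) 1, C * |q x| := by
    have hint : IntegrableOn (fun x => |Fk φ k (x, t)| * |q x|) (Set.Ioc (0:ℝ) 1) := by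
      have := (int_slice hφ hper₁ hper₂ hq k t).abs
      simp only [abs_mul] at this
      exact this
    refine integral_mono hint (hq.int.abs.const_mul C) ?_
    intro x
    exact mul_le_mul_of_nonneg_right (hC x t) (abs_nonneg _)
  have h3 : (∫ x in Set.Ioc (0:ℝ) 1, C * |q x|) = C * ∫ x in Set.Ioc (0:ℝ) 1, |q x| :=
    integral_const_mul _ _
  have h4 := l1_le_l2 hq
  calc |∫ x in Set.Ioc (0:ℝ) 1, Fk φ k (x, t) * q x|
      ≤ ∫ x in Set.Ioc (0:ℝ) 1, |Fk φ k (x, t)| * |q x| := h1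
    _ ≤ ∫ x in Set.Ioc (0:ℝ) 1, C * |q x| := h2
    _ = C * ∫ x in Set.Ioc (0:ℝ) 1, |q x| := h3
    _ ≤ C * nrm q := mul_le_mul_of_nonneg_left h4 hC0

/-- second-order Taylor bound with a crude constant -/
lemma taylor_bound {f f1 f2 : ℝ → ℝ} (hf : ∀ t, HasDerivAt f (f1 t) t)
    (hf1 : ∀ t, HasDerivAt f1 (f2 t) t) {M : ℝ} (hM : ∀ t, |f2 t| ≤ M) (a b : ℝ) :
    |f b - f a - (b - a) * f1 a| ≤ M * (b - a)^2 := by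
  set g : ℝ → ℝ := fun s => f s - f a - (s - a) * f1 a with hg_def
  have hg : ∀ s, HasDerivAt g (f1 s - f1 a) s := by
    intro s
    have h1 : HasDerivAt (fun s : ℝ => (s - a) * f1 a) (f1 a) s := by
      simpa using ((hasDerivAt_id s).sub_const a).mul_const (f1 a)
    exact ((hf s).sub_const (f a)).sub h1
  have habs : ∀ s ∈ Set.uIcc a b, |s - a| ≤ |b - a| := by
    intro s hs
    rcases le_total a b with hab | hab
    · rw [Set.uIcc_of_le hab] at hs
      rw [abs_of_nonneg (by linarith [hs.1]), abs_of_nonneg (by linarith)]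
      linarith [hs.2]
    · rw [Set.uIcc_of_ge hab] at hs
      rw [abs_of_nonpos (by linarith [hs.2]), abs_of_nonpos (by linarith)]
      linarith [hs.1]
  -- bound the derivative of f1 on the segment
  have hMnn : 0 ≤ M := le_trans (abs_nonneg _) (hM a)
  have hstep : ∀ s ∈ Set.uIcc a b, |f1 s - f1 a| ≤ M * |b - a| := by
    intro s hs
    have := Convex.norm_image_sub_le_of_norm_hasDerivWithin_le
      (f := f1) (f' := f2) (s := Set.uIcc a b)
      (fun u _ => (hf1 u).hasDerivWithinAt)
      (fun u _ => by rw [Real.norm_eq_abs]; exact hM u)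
      (convex_uIcc a b) Set.left_mem_uIcc hs
    rw [Real.norm_eq_abs, Real.norm_eq_abs] at this
    calc |f1 s - f1 a| ≤ M * |s - a| := this
    _ ≤ M * |b - a| := mul_le_mul_of_nonneg_left (habs s hs) hMnn
  have hmain := Convex.norm_image_sub_le_of_norm_hasDerivWithin_le
      (f := g) (f' := fun s => f1 s - f1 a) (s := Set.uIcc a b)
      (fun u _ => (hg u).hasDerivWithinAt)
      (fun u hu => by rw [Real.norm_eq_abs]; exact hstep u hu)
      (convex_uIcc a b) Set.left_mem_uIcc Set.right_mem_uIcc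
  have hga : g a = 0 := by simp [hg_def]
  rw [Real.norm_eq_abs, Real.norm_eq_abs, hga, sub_zero] at hmain
  calc |f b - f a - (b - a) * f1 a| = |g b| := rfl
  _ ≤ M * |b - a| * |b - a| := hmain
  _ = M * (b - a)^2 := by rw [mul_assoc, ← abs_mul, ← sq, abs_of_nonneg (sq_nonneg _)]

lemma phiStar_smul (c : ℝ) (q : ℝ → ℝ) (t : ℝ) :
    PhiStar φ (fun x => c * q x) t = c * PhiStar φ q t := by
  unfold PhiStar
  rw [← integral_const_mul]
  congr 1; funext x; ring

lemma phiStar_deriv_smul (hφ : ContDiff ℝ (⊤ : ℕ∞) (fun p : ℝ × ℝ => φ p.1 p.2))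
    (hper₁ : ∀ t : ℝ, Function.Periodic (fun x => φ x t) 1)
    (hper₂ : ∀ x : ℝ, Function.Periodic (fun t => φ x t) 1)
    {q : ℝ → ℝ} (hq : S q) (c : ℝ) (t : ℝ) :
    deriv (PhiStar φ (fun x => c * q x)) t = c * deriv (PhiStar φ q) t := by
  rw [phiStar_deriv hφ hper₁ hper₂ (hq.smul c), phiStar_deriv hφ hper₁ hper₂ hq]
  have e : (∫ x in Set.Ioc (0:ℝ) 1, Fk φ 1 (x, t) * (c * q x))
      = c * ∫ x in Set.Ioc (0:ℝ) 1, Fk φ 1 (x, t) * q x := by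
    rw [← integral_const_mul]
    congr 1; funext x; ring
  exact e

lemma phiStar_per (hper₂ : ∀ x : ℝ, Function.Periodic (fun t => φ x t) 1) (q : ℝ → ℝ) :
    Function.Periodic (PhiStar φ q) 1 := by
  intro t
  unfold PhiStar
  congr 1; funext x
  have h : φ x (t + 1) = φ x t := hper₂ x t
  rw [h]

lemma int1_per (hφ : ContDiff ℝ (⊤ : ℕ∞) (fun p : ℝ × ℝ => φ p.1 p.2))
    (hper₂ : ∀ x : ℝ, Function.Periodic (fun t => φ x t) 1) (q : ℝ → ℝ) (k : ℕ) :
    Function.Periodic (fun t => ∫ x in Set.Ioc (0:ℝ) 1, Fk φ k (x, t) * q x) 1 := by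
  intro t
  simp only
  congr 1; funext x
  have h : Fk φ k (x, t + 1) = Fk φ k (x, t) := Fk_per₂ hφ hper₂ k x t
  rw [h]

/-- Claim A : a function feasible for `D^∞` satisfies the grid constraints up to `M h²`. -/
lemma lemA (hφ : ContDiff ℝ (⊤ : ℕ∞) (fun p : ℝ × ℝ => φ p.1 p.2))
    (hper₁ : ∀ t : ℝ, Function.Periodic (fun x => φ x t) 1)
    (hper₂ : ∀ x : ℝ, Function.Periodic (fun t => φ x t) 1)
    {q : ℝ → ℝ} (hq : S q) (hle : ∀ t, PhiStar φ q t ≤ 1)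
    {C2 : ℝ} (hC0 : 0 ≤ C2) (hC : ∀ x t : ℝ, |Fk φ 2 (x, t)| ≤ C2)
    {h : ℝ} (hh : 0 < h) (p : ℝ) :
    PhiStar φ q p + (h/2) * |deriv (PhiStar φ q) p| ≤ 1 + (C2 * nrm q) * h^2 := by
  set f1 : ℝ → ℝ := fun t => ∫ x in Set.Ioc (0:ℝ) 1, Fk φ 1 (x, t) * q x with hf1_def
  set f2 : ℝ → ℝ := fun t => ∫ x in Set.Ioc (0:ℝ) 1, Fk φ 2 (x, t) * q x with hf2_def
  have hf : ∀ t, HasDerivAt (PhiStar φ q) (f1 t) t := fun t =>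
    hasDerivAt_int hφ hper₁ hper₂ hq 0 t
  have hf1 : ∀ t, HasDerivAt f1 (f2 t) t := fun t =>
    hasDerivAt_int hφ hper₁ hper₂ hq 1 t
  have hM : ∀ t, |f2 t| ≤ C2 * nrm q := fun t =>
    int_abs_bound hφ hper₁ hper₂ hq hC0 hC t
  set M := C2 * nrm q with hM_def
  have hderiv : deriv (PhiStar φ q) = f1 := phiStar_deriv hφ hper₁ hper₂ hq
  rw [hderiv]
  set s : ℝ := if 0 ≤ f1 p then 1 else -1 with hs_def
  set b : ℝ := p + s * (h/2) with hb_def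
  have htay := taylor_bound hf hf1 hM p b
  have hbp : b - p = s * (h/2) := by rw [hb_def]; ring
  have hsprod : (b - p) * f1 p = (h/2) * |f1 p| := by
    rw [hbp, hs_def]
    by_cases hsgn : 0 ≤ f1 p
    · rw [if_pos hsgn, abs_of_nonneg hsgn]; ring
    · rw [if_neg hsgn, abs_of_neg (lt_of_not_ge hsgn)]; ring
  have hsq : (b - p)^2 ≤ h^2 := by
    rw [hbp, hs_def]
    by_cases hsgn : 0 ≤ f1 p <;> [rw [if_pos hsgn]; rw [if_neg hsgn]] <;> nlinarith
  have hMnn : 0 ≤ M := le_trans (abs_nonneg _) (hM p)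
  have h1 := (abs_le.1 htay).1
  rw [hsprod] at h1
  have h2 : PhiStar φ q p + (h/2) * |f1 p| ≤ PhiStar φ q b + M * (b-p)^2 := by linarith
  calc PhiStar φ q p + (h/2) * |f1 p| ≤ PhiStar φ q b + M * (b-p)^2 := h2
  _ ≤ 1 + M * h^2 := add_le_add (hle b) (mul_le_mul_of_nonneg_left hsq hMnn)

/-- Claim B : a function feasible for `D^n` satisfies the `D^∞` constraint up to `M h²`. -/
lemma lemB (hφ : ContDiff ℝ (⊤ : ℕ∞) (fun p : ℝ × ℝ => φ p.1 p.2))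
    (hper₁ : ∀ t : ℝ, Function.Periodic (fun x => φ x t) 1)
    (hper₂ : ∀ x : ℝ, Function.Periodic (fun t => φ x t) 1)
    {P : ℕ → ℕ} {n : ℕ} (hPn : 0 < P n)
    {q : ℝ → ℝ} (hq : S q) (hDn : InDn φ P n q)
    {C2 : ℝ} (hC0 : 0 ≤ C2) (hC : ∀ x t : ℝ, |Fk φ 2 (x, t)| ≤ C2) (t : ℝ) :
    PhiStar φ q t ≤ 1 + (C2 * nrm q) * (1 / (P n : ℝ))^2 := by
  set h : ℝ := 1 / (P n : ℝ) with hh_def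
  have hpn : (0:ℝ) < (P n : ℝ) := by exact_mod_cast hPn
  have hh : 0 < h := by positivity
  have hhp : h * (P n : ℝ) = 1 := by rw [hh_def]; field_simp
  set f1 : ℝ → ℝ := fun t => ∫ x in Set.Ioc (0:ℝ) 1, Fk φ 1 (x, t) * q x with hf1_def
  set f2 : ℝ → ℝ := fun t => ∫ x in Set.Ioc (0:ℝ) 1, Fk φ 2 (x, t) * q x with hf2_def
  have hf : ∀ t, HasDerivAt (PhiStar φ q) (f1 t) t := fun t =>
    hasDerivAt_int hφ hper₁ hper₂ hq 0 t
  have hf1 : ∀ t, HasDerivAt f1 (f2 t) t := fun t =>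
    hasDerivAt_int hφ hper₁ hper₂ hq 1 t
  have hM : ∀ t, |f2 t| ≤ C2 * nrm q := fun t =>
    int_abs_bound hφ hper₁ hper₂ hq hC0 hC t
  set M := C2 * nrm q with hM_def
  have hMnn : 0 ≤ M := le_trans (abs_nonneg _) (hM t)
  have hderiv : deriv (PhiStar φ q) = f1 := phiStar_deriv hφ hper₁ hper₂ hq
  -- find a nearby grid point
  obtain ⟨i, w, m, hw, ht⟩ :
      ∃ (i : Fin (P n)) (w : ℝ) (m : ℤ), |w| ≤ h/2 ∧ t = (i:ℝ) * h + w + m := by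
    set u : ℝ := Int.fract t with hu_def
    have hu0 : 0 ≤ u := Int.fract_nonneg t
    have hu1 : u < 1 := Int.fract_lt_one t
    set j : ℤ := ⌊u * (P n : ℝ) + 1/2⌋ with hj_def
    have hj0 : 0 ≤ j := Int.floor_nonneg.2 (by positivity)
    have hjle : (j:ℝ) ≤ u * (P n : ℝ) + 1/2 := Int.floor_le _
    have hjgt : u * (P n : ℝ) + 1/2 < (j:ℝ) + 1 := Int.lt_floor_add_one _
    have hjr : (j:ℝ) < (P n : ℝ) + 1 := by nlinarith
    have hjint : j < (P n : ℤ) + 1 := by exact_mod_cast hjr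
    have hjPn' : j ≤ (P n : ℤ) := by omega
    have hjPn : (j:ℝ) ≤ (P n : ℝ) := by exact_mod_cast hjPn'
    have hwb : |u - (j:ℝ) * h| ≤ h/2 := by
      rw [abs_le]; constructor <;> nlinarith
    have htu : t = u + (⌊t⌋ : ℝ) := by rw [hu_def, Int.fract]; ring
    by_cases hcase : j = (P n : ℤ)
    · refine ⟨⟨0, hPn⟩, u - 1, ⌊t⌋ + 1, ?_, ?_⟩
      · have : (j:ℝ) * h = 1 := by rw [hcase]; push_cast; linarith [hhp]
        rw [← this]; exact hwb
      · push_cast; simp; linarith [htu]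
    · have hjlt : j < (P n : ℤ) := lt_of_le_of_ne (by exact_mod_cast hjPn) hcase
      refine ⟨⟨j.toNat, by omega⟩, u - (j:ℝ) * h, ⌊t⌋, hwb, ?_⟩
      have : ((j.toNat : ℕ) : ℝ) = (j : ℝ) := by
        exact_mod_cast Int.toNat_of_nonneg hj0
      push_cast
      rw [this]
      linarith [htu]
  -- periodicity : f t = f (i h + w)
  have hper : PhiStar φ q t = PhiStar φ q ((i:ℝ) * h + w) := by
    have hp := (phiStar_per hper₂ q).sub_zsmul_eq (x := t) m
    have he : t - (m:ℤ) • (1:ℝ) = (i:ℝ) * h + w := by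
      rw [zsmul_eq_mul, mul_one]; linarith [ht]
    rw [← hp, he]
  rw [hper]
  -- Taylor around the grid point
  set a : ℝ := (i:ℝ) * h with ha_def
  have htay := taylor_bound hf hf1 hM a (a + w)
  have h1 := (abs_le.1 htay).2
  have hgrid := hDn i
  rw [hderiv] at hgrid
  rw [← hh_def] at hgrid
  have hw2 : (a + w - a)^2 ≤ h^2 := by
    have := abs_le.1 hw
    nlinarith
  have hprod : (a + w - a) * f1 a ≤ (h/2) * |f1 a| := by
    have h1 : (a + w - a) * f1 a ≤ |w * f1 a| := by
      rw [show a + w - a = w by ring]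
      exact le_abs_self _
    rw [abs_mul] at h1
    calc (a + w - a) * f1 a ≤ |w| * |f1 a| := h1
    _ ≤ (h/2) * |f1 a| := mul_le_mul_of_nonneg_right hw (abs_nonneg _)
  have : PhiStar φ q (a + w) ≤ PhiStar φ q a + (a + w - a) * f1 a + M * (a + w - a)^2 := by
    linarith
  calc PhiStar φ q (a + w)
      ≤ PhiStar φ q a + (a + w - a) * f1 a + M * (a + w - a)^2 := this
    _ ≤ PhiStar φ q a + (h/2) * |f1 a| + M * h^2 := by
        have := mul_le_mul_of_nonneg_left hw2 hMnn
        linarith [hprod]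
    _ ≤ 1 + M * h^2 := by linarith [hgrid]

lemma scaled_Dinf {q : ℝ → ℝ} {e : ℝ} (he : 0 ≤ e)
    (hb : ∀ t, PhiStar φ q t ≤ 1 + e) :
    InDinf φ (fun x => (1/(1+e)) * q x) := by
  intro t
  rw [phiStar_smul]
  have h1 : (0:ℝ) < 1 + e := by linarith
  rw [show (1/(1+e)) * PhiStar φ q t = PhiStar φ q t / (1+e) by ring, div_le_one h1]
  exact hb t

lemma scaled_Dn (hφ : ContDiff ℝ (⊤ : ℕ∞) (fun p : ℝ × ℝ => φ p.1 p.2))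
    (hper₁ : ∀ t : ℝ, Function.Periodic (fun x => φ x t) 1)
    (hper₂ : ∀ x : ℝ, Function.Periodic (fun t => φ x t) 1)
    {P : ℕ → ℕ} {n : ℕ} {q : ℝ → ℝ} (hq : S q) {e : ℝ} (he : 0 ≤ e)
    (hb : ∀ i : Fin (P n), PhiStar φ q ((i:ℝ) * (1 / (P n : ℝ)))
      + ((1 / (P n : ℝ))/2) * |deriv (PhiStar φ q) ((i:ℝ) * (1 / (P n : ℝ)))| ≤ 1 + e) :
    InDn φ P n (fun x => (1/(1+e)) * q x) := by
  intro i
  have h1 : (0:ℝ) < 1 + e := by linarith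
  have hc : (0:ℝ) ≤ 1/(1+e) := by positivity
  rw [phiStar_smul, phiStar_deriv_smul hφ hper₁ hper₂ hq, abs_mul, abs_of_nonneg hc]
  have hh2 : (0:ℝ) ≤ (1 / (P n : ℝ))/2 := by positivity
  have key : (1/(1+e)) * PhiStar φ q ((i:ℝ) * (1 / (P n : ℝ)))
      + ((1 / (P n : ℝ))/2) * ((1/(1+e)) * |deriv (PhiStar φ q) ((i:ℝ) * (1 / (P n : ℝ)))|)
      = (1/(1+e)) * (PhiStar φ q ((i:ℝ) * (1 / (P n : ℝ)))
        + ((1 / (P n : ℝ))/2) * |deriv (PhiStar φ q) ((i:ℝ) * (1 / (P n : ℝ)))|) := by ring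
  rw [key]
  have := mul_le_mul_of_nonneg_left (hb i) hc
  calc (1/(1+e)) * (PhiStar φ q ((i:ℝ) * (1 / (P n : ℝ)))
        + ((1 / (P n : ℝ))/2) * |deriv (PhiStar φ q) ((i:ℝ) * (1 / (P n : ℝ)))|)
      ≤ (1/(1+e)) * (1 + e) := this
    _ = 1 := by field_simp

lemma comb_Dn (hφ : ContDiff ℝ (⊤ : ℕ∞) (fun p : ℝ × ℝ => φ p.1 p.2))
    (hper₁ : ∀ t : ℝ, Function.Periodic (fun x => φ x t) 1)
    (hper₂ : ∀ x : ℝ, Function.Periodic (fun t => φ x t) 1)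
    {P : ℕ → ℕ} {n : ℕ} {q1 q2 : ℝ → ℝ} (hq1 : S q1) (hq2 : S q2)
    (hd1 : InDn φ P n q1) (hd2 : InDn φ P n q2) {t : ℝ} (ht0 : 0 ≤ t) (ht1 : t ≤ 1) :
    InDn φ P n (fun x => (1-t) * q1 x + t * q2 x) := by
  intro i
  set p : ℝ := (i:ℝ) * (1 / (P n : ℝ)) with hp_def
  rw [phiStar_comb hφ hper₁ hper₂ hq1 hq2, phiStar_deriv_comb hφ hper₁ hper₂ hq1 hq2]
  have hh2 : (0:ℝ) ≤ (1 / (P n : ℝ))/2 := by positivity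
  have habs : |(1-t) * deriv (PhiStar φ q1) p + t * deriv (PhiStar φ q2) p|
      ≤ (1-t) * |deriv (PhiStar φ q1) p| + t * |deriv (PhiStar φ q2) p| := by
    calc |(1-t) * deriv (PhiStar φ q1) p + t * deriv (PhiStar φ q2) p|
        ≤ |(1-t) * deriv (PhiStar φ q1) p| + |t * deriv (PhiStar φ q2) p| := abs_add_le _ _
      _ = (1-t) * |deriv (PhiStar φ q1) p| + t * |deriv (PhiStar φ q2) p| := by
          rw [abs_mul, abs_mul, abs_of_nonneg (by linarith : (0:ℝ) ≤ 1 - t), abs_of_nonneg ht0]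
  have hm := mul_le_mul_of_nonneg_left habs hh2
  have hg1 := mul_le_mul_of_nonneg_left (hd1 i) (by linarith : (0:ℝ) ≤ 1 - t)
  have hg2 := mul_le_mul_of_nonneg_left (hd2 i) ht0
  rw [← hp_def] at hg1 hg2
  nlinarith [hg1, hg2, hm]

lemma II_comm (f g : ℝ → ℝ) : II f g = II g f := by
  unfold II; congr 1; funext x; ring

lemma NN_swap (f g : ℝ → ℝ) : NN (fun x => f x - g x) = NN (fun x => g x - f x) := by
  unfold NN; congr 1; funext x; ring

/-- variational inequality for projections onto convex sets, raw form -/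
lemma var_ineq {z qs q : ℝ → ℝ} (hz : S z) (hqs : S qs) (hq : S q)
    (hseg : ∀ t : ℝ, 0 ≤ t → t ≤ 1 →
      NN (fun x => z x - qs x) ≤ NN (fun x => z x - (qs x + t * (q x - qs x)))) :
    NN (fun x => q x - qs x) ≤ NN (fun x => q x - z x) - NN (fun x => z x - qs x) := by
  have hd : S (fun x => q x - qs x) := hq.sub hqs
  have he : S (fun x => z x - qs x) := hz.sub hqs
  have key : ∀ t : ℝ, 0 < t → t ≤ 1 →
      II (fun x => z x - qs x) (fun x => q x - qs x)
        ≤ (t/2) * NN (fun x => q x - qs x) := by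
    intro t ht0 ht1
    have h0 := hseg t ht0.le ht1
    have h1 : (fun x => z x - (qs x + t * (q x - qs x)))
        = fun x => (z x - qs x) - t * (q x - qs x) := by funext x; ring
    rw [h1] at h0
    have h2 : NN (fun x => (z x - qs x) - t * (q x - qs x))
        = NN (fun x => z x - qs x)
          - 2 * II (fun x => z x - qs x) (fun x => t * (q x - qs x))
          + NN (fun x => t * (q x - qs x)) := NN_sub he (hd.smul t)
    have h3 : II (fun x => z x - qs x) (fun x => t * (q x - qs x))
        = t * II (fun x => z x - qs x) (fun x => q x - qs x) := II_smul_right t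
    have h4 : NN (fun x => t * (q x - qs x)) = t^2 * NN (fun x => q x - qs x) := NN_smul t _
    rw [h2, h3, h4] at h0
    nlinarith [h0, NN_nonneg (fun x => q x - qs x)]
  have hI : II (fun x => z x - qs x) (fun x => q x - qs x) ≤ 0 := by
    refine le_of_forall_pos_le_add ?_
    intro ε hε
    by_cases hNd : NN (fun x => q x - qs x) ≤ 2*ε
    · have := key 1 one_pos le_rfl
      rw [zero_add]
      linarith
    · push_neg at hNd
      have hNd0 : 0 < NN (fun x => q x - qs x) := by linarith
      have ht0 : 0 < 2*ε / NN (fun x => q x - qs x) := by positivity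
      have ht1 : 2*ε / NN (fun x => q x - qs x) ≤ 1 := by
        rw [div_le_one hNd0]; linarith
      have := key _ ht0 ht1
      rw [zero_add]
      have heq : (2*ε / NN (fun x => q x - qs x) / 2) * NN (fun x => q x - qs x) = ε := by
        field_simp
      linarith [this, heq.le, heq.ge]
  have h5 : NN (fun x => q x - z x)
      = NN (fun x => q x - qs x)
        - 2 * II (fun x => q x - qs x) (fun x => z x - qs x)
        + NN (fun x => z x - qs x) := by
    rw [show (fun x => q x - z x) = (fun x => (q x - qs x) - (z x - qs x)) from
      funext fun x => by ring]
    exact NN_sub hd he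
  have hIc : II (fun x => q x - qs x) (fun x => z x - qs x)
      = II (fun x => z x - qs x) (fun x => q x - qs x) := II_comm _ _
  rw [hIc] at h5
  linarith

end Deriv
end CBPaux

lemma memL2T_S {q : ℝ → ℝ} (h : MemL2T q) : CBPaux.S q := ⟨h.1, h.2.2⟩

lemma memL2T_comb {q1 q2 : ℝ → ℝ} (h1 : MemL2T q1) (h2 : MemL2T q2) (a b : ℝ) :
    MemL2T (fun x => a * q1 x + b * q2 x) := by
  refine ⟨(h1.1.const_mul a).add (h2.1.const_mul b), ?_, ?_⟩
  · intro x
    show a * q1 (x+1) + b * q2 (x+1) = a * q1 x + b * q2 x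
    rw [h1.2.1 x, h2.2.1 x]
  · exact (((memL2T_S h1).smul a).add ((memL2T_S h2).smul b)).2

lemma memL2T_smul {q : ℝ → ℝ} (h : MemL2T q) (c : ℝ) : MemL2T (fun x => c * q x) := by
  have := memL2T_comb h h c 0
  simpa using this

lemma memL2T_zero : MemL2T (fun _ : ℝ => (0:ℝ)) :=
  ⟨measurable_const, fun _ => rfl, CBPaux.S.zero.2⟩



set_option maxHeartbeats 1000000 in
open CBPaux in
/-- **Convergence of C-BP dual certificates for fixed `λ`.**  `q_λ^n` is the
projection of `y/λ` onto `D^n` (the unique solution of the dual of the thin-grid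
C-BP `Q_λ^n(y)`) and `q_λ^∞` the projection of `y/λ` onto `D^∞` (dual of the positive
Beurling lasso).  Then `q_λ^n → q_λ^∞` strongly in `L²(T)` and, for every `k`, the
`k`-th derivatives of `μ_λ^n = Φ^*q_λ^n` converge uniformly to those of
`μ_λ^∞ = Φ^*q_λ^∞`. -/
theorem cbp_dual_certificates_convergence
    (φ : ℝ → ℝ → ℝ)
    (hφ_smooth : ContDiff ℝ (⊤ : ℕ∞) (fun p : ℝ × ℝ => φ p.1 p.2))
    (hφ_per₁ : ∀ t : ℝ, Function.Periodic (fun x => φ x t) 1)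
    (hφ_per₂ : ∀ x : ℝ, Function.Periodic (fun t => φ x t) 1)
    (P : ℕ → ℕ) (hP : ∀ n, 0 < P n) (hPnested : ∀ n, P n ∣ P (n + 1))
    (hPfine : Tendsto (fun n => (P n : ℝ)) atTop atTop)
    (y : ℝ → ℝ) (hy : MemL2T y)
    (lam : ℝ) (hlam : 0 < lam)
    -- q_λ^n : the projection of y/λ onto D^n
    (qn : ℕ → ℝ → ℝ)
    (hqn : ∀ n, MemL2T (qn n) ∧ InDn φ P n (qn n) ∧
      ∀ q' : ℝ → ℝ, MemL2T q' → InDn φ P n q' →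
        (∫ x in Set.Ioc (0:ℝ) 1, (y x / lam - qn n x)^2) ≤
        ∫ x in Set.Ioc (0:ℝ) 1, (y x / lam - q' x)^2)
    -- q_λ^∞ : the projection of y/λ onto D^∞
    (qinf : ℝ → ℝ)
    (hqinf : MemL2T qinf ∧ InDinf φ qinf ∧
      ∀ q' : ℝ → ℝ, MemL2T q' → InDinf φ q' →
        (∫ x in Set.Ioc (0:ℝ) 1, (y x / lam - qinf x)^2) ≤
        ∫ x in Set.Ioc (0:ℝ) 1, (y x / lam - q' x)^2) :
    -- strong L² convergence and uniform convergence of all derivatives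
    Tendsto (fun n => ∫ x in Set.Ioc (0:ℝ) 1, (qn n x - qinf x)^2) atTop (nhds 0) ∧
    ∀ k : ℕ, TendstoUniformly (fun n => iteratedDeriv k (PhiStar φ (qn n)))
      (iteratedDeriv k (PhiStar φ qinf)) atTop := by
  
  classical
  obtain ⟨hqinfL2, hqinfD, hqinfMin⟩ := hqinf
  set z : ℝ → ℝ := fun x => y x / lam with hz_def
  have hzS : S z := by
    have h1 := (memL2T_S hy).smul (1/lam)
    have e : (fun x => (1/lam) * y x) = z := funext fun x => by
      rw [hz_def]; field_simp
    rwa [e] at h1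
  obtain ⟨C2, hC20, hC2⟩ := Fk_bound hφ_smooth hφ_per₁ hφ_per₂ 2
  have hSqn : ∀ n, S (qn n) := fun n => memL2T_S (hqn n).1
  have hSqinf : S qinf := memL2T_S hqinfL2
  -- the zero function is feasible for all the problems
  have hphiszero : PhiStar φ (fun _ : ℝ => (0:ℝ)) = fun _ => (0:ℝ) := by
    funext t; unfold PhiStar; simp
  have hzeroDn : ∀ n, InDn φ P n (fun _ => (0:ℝ)) := by
    intro n i
    rw [hphiszero]
    simp
  have hzeroDinf : InDinf φ (fun _ => (0:ℝ)) := by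
    intro t; rw [hphiszero]; norm_num
  -- distance bounds
  have hAle : ∀ n, NN (fun x => z x - qn n x) ≤ NN z := by
    intro n
    have h1 : NN (fun x => z x - qn n x) ≤ NN (fun x => z x - 0) :=
      (hqn n).2.2 (fun _ => 0) memL2T_zero (hzeroDn n)
    calc NN (fun x => z x - qn n x) ≤ NN (fun x => z x - 0) := h1
    _ = NN z := by congr 1; funext x; rw [sub_zero]
  have hble : NN (fun x => z x - qinf x) ≤ NN z := by
    have h1 : NN (fun x => z x - qinf x) ≤ NN (fun x => z x - 0) :=
      hqinfMin (fun _ => 0) memL2T_zero hzeroDinf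
    calc NN (fun x => z x - qinf x) ≤ NN (fun x => z x - 0) := h1
    _ = NN z := by congr 1; funext x; rw [sub_zero]
  set nz : ℝ := nrm z with hnz_def
  have hnz0 : 0 ≤ nz := nrm_nonneg z
  set b : ℝ := nrm (fun x => z x - qinf x) with hb_def
  have hb0 : 0 ≤ b := nrm_nonneg _
  have hbnz : b ≤ nz := nrm_mono hble
  set a : ℕ → ℝ := fun n => nrm (fun x => z x - qn n x) with ha_def
  have ha0 : ∀ n, 0 ≤ a n := fun n => nrm_nonneg _
  have hanz : ∀ n, a n ≤ nz := fun n => nrm_mono (hAle n)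
  have hqn_nrm : ∀ n, nrm (qn n) ≤ 2 * nz := by
    intro n
    have e : qn n = fun x => z x + (-1) * (z x - qn n x) := funext fun x => by ring
    calc nrm (qn n) = nrm (fun x => z x + (-1) * (z x - qn n x)) := by rw [← e]
    _ ≤ nrm z + nrm (fun x => (-1) * (z x - qn n x)) :=
        nrm_add_le hzS ((hzS.sub (hSqn n)).smul (-1))
    _ = nz + a n := by rw [nrm_smul]; simp [ha_def, hnz_def]
    _ ≤ 2 * nz := by linarith [hanz n]
  -- the scaled functions
  set εf : ℕ → ℝ := fun n => C2 * nrm qinf * (1 / (P n : ℝ))^2 with hεf_def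
  set δf : ℕ → ℝ := fun n => C2 * nrm (qn n) * (1 / (P n : ℝ))^2 with hδf_def
  have hε0 : ∀ n, 0 ≤ εf n := fun n => by
    have := nrm_nonneg qinf; positivity
  have hδ0 : ∀ n, 0 ≤ δf n := fun n => by
    have := nrm_nonneg (qn n); positivity
  set qeps : ℕ → ℝ → ℝ := fun n x => (1/(1 + εf n)) * qinf x with hqeps_def
  set qdel : ℕ → ℝ → ℝ := fun n x => (1/(1 + δf n)) * qn n x with hqdel_def
  have hSqeps : ∀ n, S (qeps n) := fun n => hSqinf.smul _
  have hqepsL2 : ∀ n, MemL2T (qeps n) := fun n => memL2T_smul hqinfL2 _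
  have hqdelL2 : ∀ n, MemL2T (qdel n) := fun n => memL2T_smul (hqn n).1 _
  have hhn : ∀ n, (0:ℝ) < 1 / (P n : ℝ) := fun n => by
    have : (0:ℝ) < (P n : ℝ) := by exact_mod_cast hP n
    positivity
  have hqepsDn : ∀ n, InDn φ P n (qeps n) := by
    intro n
    exact scaled_Dn hφ_smooth hφ_per₁ hφ_per₂ hSqinf (hε0 n)
      (fun i => lemA hφ_smooth hφ_per₁ hφ_per₂ hSqinf hqinfD hC20 hC2 (hhn n) _)
  have hqdelDinf : ∀ n, InDinf φ (qdel n) := by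
    intro n
    exact scaled_Dinf (hδ0 n)
      (fun t => lemB hφ_smooth hφ_per₁ hφ_per₂ (hP n) (hSqn n) (hqn n).2.1 hC20 hC2 t)
  -- variational inequality at qn n with competitor qeps n
  have hvar : ∀ n, NN (fun x => qeps n x - qn n x)
      ≤ NN (fun x => qeps n x - z x) - NN (fun x => z x - qn n x) := by
    intro n
    refine var_ineq hzS (hSqn n) (hSqeps n) ?_
    intro t ht0 ht1
    have hcombL2 := memL2T_comb (hqn n).1 (hqepsL2 n) (1-t) t
    have hcombD := comb_Dn hφ_smooth hφ_per₁ hφ_per₂ (hSqn n) (hSqeps n)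
      (hqn n).2.1 (hqepsDn n) ht0 ht1
    have hmin : NN (fun x => z x - qn n x)
        ≤ NN (fun x => z x - ((1-t) * qn n x + t * qeps n x)) :=
      (hqn n).2.2 _ hcombL2 hcombD
    have e : (fun x => z x - ((1-t) * qn n x + t * qeps n x))
        = (fun x => z x - (qn n x + t * (qeps n x - qn n x))) := funext fun x => by ring
    rwa [e] at hmin
  -- minimality of qinf against qdel n
  have hmininf : ∀ n, NN (fun x => z x - qinf x) ≤ NN (fun x => z x - qdel n x) :=
    fun n => hqinfMin _ (hqdelL2 n) (hqdelDinf n)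
  -- quantitative bounds
  set A : ℕ → ℝ := fun n => εf n * nrm qinf with hA_def
  set B : ℕ → ℝ := fun n => 4 * C2 * nz^2 * (1 / (P n : ℝ))^2 with hB_def
  have hA0 : ∀ n, 0 ≤ A n := fun n => mul_nonneg (hε0 n) (nrm_nonneg _)
  have hB0 : ∀ n, 0 ≤ B n := fun n => by positivity
  -- nrm (qeps n - qinf) ≤ A n
  have hqeqi : ∀ n, nrm (fun x => qeps n x - qinf x) ≤ A n := by
    intro n
    have h2 : (0:ℝ) < 1 + εf n := by linarith [hε0 n]
    have e : (fun x => qeps n x - qinf x) = fun x => (1/(1 + εf n) - 1) * qinf x :=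
      funext fun x => by rw [hqeps_def]; ring
    rw [e, nrm_smul]
    have habs : |1/(1 + εf n) - 1| = εf n / (1 + εf n) := by
      rw [abs_of_nonpos]
      · field_simp
        ring
      · have : 1/(1 + εf n) ≤ 1 := by
          rw [div_le_one h2]; linarith [hε0 n]
        linarith
    rw [habs]
    have hd : εf n / (1 + εf n) ≤ εf n := div_le_self (hε0 n) (by linarith [hε0 n])
    exact mul_le_mul_of_nonneg_right hd (nrm_nonneg _)
  -- nrm (qn n - qdel n) ≤ B n
  have hqnqd : ∀ n, nrm (fun x => qn n x - qdel n x) ≤ B n := by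
    intro n
    have h2 : (0:ℝ) < 1 + δf n := by linarith [hδ0 n]
    have e : (fun x => qn n x - qdel n x) = fun x => (1 - 1/(1 + δf n)) * qn n x :=
      funext fun x => by rw [hqdel_def]; ring
    rw [e, nrm_smul]
    have habs : |1 - 1/(1 + δf n)| = δf n / (1 + δf n) := by
      rw [abs_of_nonneg]
      · field_simp
        ring
      · have : 1/(1 + δf n) ≤ 1 := by
          rw [div_le_one h2]; linarith [hδ0 n]
        linarith
    rw [habs]
    have hd : δf n / (1 + δf n) ≤ δf n := div_le_self (hδ0 n) (by linarith [hδ0 n])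
    have h3 : |1 - 1/(1 + δf n)| * nrm (qn n) ≤ δf n * nrm (qn n) := by
      rw [habs]
      exact mul_le_mul_of_nonneg_right hd (nrm_nonneg _)
    have h4 : δf n * nrm (qn n) ≤ B n := by
      show C2 * nrm (qn n) * (1 / (P n : ℝ))^2 * nrm (qn n)
        ≤ 4 * C2 * nz^2 * (1 / (P n : ℝ))^2
      have hq2 := hqn_nrm n
      have hqn0 := nrm_nonneg (qn n)
      have hsq := sq_nonneg (1 / (P n : ℝ))
      have hr2 : nrm (qn n)^2 ≤ 4 * nz^2 := by nlinarith [hq2, hqn0]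
      have hkey := mul_le_mul_of_nonneg_left hr2 (mul_nonneg hC20 hsq)
      nlinarith [hkey]
    calc δf n / (1 + δf n) * nrm (qn n) ≤ δf n * nrm (qn n) :=
        mul_le_mul_of_nonneg_right hd (nrm_nonneg _)
    _ ≤ B n := h4
  -- (1) nrm (qeps n - z) ≤ b + A n
  have h1 : ∀ n, nrm (fun x => qeps n x - z x) ≤ b + A n := by
    intro n
    have e : (fun x => qeps n x - z x)
        = fun x => (qinf x - z x) + (qeps n x - qinf x) := funext fun x => by ring
    calc nrm (fun x => qeps n x - z x)
        = nrm (fun x => (qinf x - z x) + (qeps n x - qinf x)) := by rw [← e]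
      _ ≤ nrm (fun x => qinf x - z x) + nrm (fun x => qeps n x - qinf x) :=
          nrm_add_le (hSqinf.sub hzS) ((hSqeps n).sub hSqinf)
      _ ≤ b + A n := by
          have hsw : nrm (fun x => qinf x - z x) = b := by
            rw [hb_def]; unfold nrm; rw [NN_swap]
          rw [hsw]
          exact add_le_add le_rfl (hqeqi n)
  -- (2) b ≤ a n + B n
  have h2 : ∀ n, b ≤ a n + B n := by
    intro n
    have hsb : b ≤ nrm (fun x => z x - qdel n x) := nrm_mono (hmininf n)
    have e : (fun x => z x - qdel n x)
        = fun x => (z x - qn n x) + (qn n x - qdel n x) := funext fun x => by ring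
    calc b ≤ nrm (fun x => z x - qdel n x) := hsb
      _ = nrm (fun x => (z x - qn n x) + (qn n x - qdel n x)) := by rw [← e]
      _ ≤ nrm (fun x => z x - qn n x) + nrm (fun x => qn n x - qdel n x) :=
          nrm_add_le (hzS.sub (hSqn n)) ((hSqn n).sub ((hSqn n).smul _))
      _ ≤ a n + B n := add_le_add le_rfl (hqnqd n)
  -- (3) quantitative bound on NN (qeps n - qn n)
  have h3 : ∀ n, NN (fun x => qeps n x - qn n x)
      ≤ 2*b*A n + A n^2 + 2*nz*B n + B n^2 := by
    intro n
    have hv := hvar n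
    have hnn1 := nrm_nonneg (fun x => qeps n x - z x)
    have he1 : NN (fun x => qeps n x - z x) ≤ (b + A n)^2 := by
      have hh := h1 n
      calc NN (fun x => qeps n x - z x)
          = nrm (fun x => qeps n x - z x)^2 := nrm_sq.symm
        _ ≤ (b + A n)^2 := by nlinarith [hh, hnn1, hb0, hA0 n]
    have he2 : (a n)^2 = NN (fun x => z x - qn n x) := nrm_sq
    have hsq2 : b^2 ≤ (a n + B n)^2 := by
      have := h2 n
      nlinarith [this, hb0, ha0 n, hB0 n]
    have hanB := mul_le_mul_of_nonneg_right (hanz n) (hB0 n)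
    nlinarith [hv, he1, he2, hsq2, hanB, hB0 n, hA0 n, ha0 n, hb0]
  -- (4)+(5) : bound on NN (qn n - qinf)
  have h5 : ∀ n, NN (fun x => qn n x - qinf x)
      ≤ (Real.sqrt (2*b*A n + A n^2 + 2*nz*B n + B n^2) + A n)^2 := by
    intro n
    have hst : nrm (fun x => qn n x - qinf x)
        ≤ Real.sqrt (2*b*A n + A n^2 + 2*nz*B n + B n^2) + A n := by
      have e : (fun x => qn n x - qinf x)
          = fun x => (qn n x - qeps n x) + (qeps n x - qinf x) := funext fun x => by ring
      calc nrm (fun x => qn n x - qinf x)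
          = nrm (fun x => (qn n x - qeps n x) + (qeps n x - qinf x)) := by rw [← e]
        _ ≤ nrm (fun x => qn n x - qeps n x) + nrm (fun x => qeps n x - qinf x) :=
            nrm_add_le ((hSqn n).sub (hSqeps n)) ((hSqeps n).sub hSqinf)
        _ ≤ Real.sqrt (2*b*A n + A n^2 + 2*nz*B n + B n^2) + A n := by
            refine add_le_add ?_ (hqeqi n)
            have hsw : NN (fun x => qn n x - qeps n x)
                = NN (fun x => qeps n x - qn n x) := NN_swap _ _
            unfold nrm
            rw [hsw]
            exact Real.sqrt_le_sqrt (h3 n)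
    have hnn := nrm_nonneg (fun x => qn n x - qinf x)
    have hsn := Real.sqrt_nonneg (2*b*A n + A n^2 + 2*nz*B n + B n^2)
    calc NN (fun x => qn n x - qinf x)
        = nrm (fun x => qn n x - qinf x)^2 := nrm_sq.symm
      _ ≤ (Real.sqrt (2*b*A n + A n^2 + 2*nz*B n + B n^2) + A n)^2 := by
          nlinarith [hst, hnn, hsn, hA0 n]
  -- limits
  have hinv : Tendsto (fun n => 1/(P n : ℝ)) atTop (nhds 0) := by
    simpa [one_div, Pi.inv_def] using hPfine.inv_tendsto_atTop
  have hsq0 : Tendsto (fun n => (1/(P n:ℝ))^2) atTop (nhds 0) := by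
    have := hinv.mul hinv
    simpa [pow_two] using this
  have hAlim : Tendsto A atTop (nhds 0) := by
    have e : A = fun n => (C2 * nrm qinf * nrm qinf) * (1/(P n:ℝ))^2 :=
      funext fun n => by rw [hA_def]; ring
    rw [e]
    simpa using hsq0.const_mul (C2 * nrm qinf * nrm qinf)
  have hBlim : Tendsto B atTop (nhds 0) := by
    have e : B = fun n => (4 * C2 * nz^2) * (1/(P n:ℝ))^2 :=
      funext fun n => by rw [hB_def]
    rw [e]
    simpa using hsq0.const_mul (4 * C2 * nz^2)
  have hρlim : Tendsto (fun n => 2*b*A n + A n^2 + 2*nz*B n + B n^2) atTop (nhds 0) := by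
    have hc : Tendsto (fun n => 2*b*A n + A n*A n + 2*nz*B n + B n*B n) atTop
        (nhds (2*b*0 + 0*0 + 2*nz*0 + 0*0)) :=
      (((hAlim.const_mul (2*b)).add (hAlim.mul hAlim)).add
        (hBlim.const_mul (2*nz))).add (hBlim.mul hBlim)
    have : (2*b*0 + 0*0 + 2*nz*0 + 0*0 : ℝ) = 0 := by ring
    rw [this] at hc
    have e : (fun n => 2*b*A n + A n^2 + 2*nz*B n + B n^2)
        = fun n => 2*b*A n + A n*A n + 2*nz*B n + B n*B n := funext fun n => by ring
    rw [e]
    exact hc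
  have hsqrtlim : Tendsto
      (fun n => Real.sqrt (2*b*A n + A n^2 + 2*nz*B n + B n^2) + A n) atTop (nhds 0) := by
    have hs : Tendsto (fun n => Real.sqrt (2*b*A n + A n^2 + 2*nz*B n + B n^2)) atTop
        (nhds 0) := by
      have := (Real.continuous_sqrt.tendsto' 0 0 (by simp)).comp hρlim
      exact this
    have := hs.add hAlim
    simpa using this
  have hbdlim : Tendsto
      (fun n => (Real.sqrt (2*b*A n + A n^2 + 2*nz*B n + B n^2) + A n)^2) atTop (nhds 0) := by
    have := hsqrtlim.mul hsqrtlim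
    simpa [pow_two] using this
  have hconc1 : Tendsto (fun n => NN (fun x => qn n x - qinf x)) atTop (nhds 0) :=
    tendsto_of_tendsto_of_tendsto_of_le_of_le tendsto_const_nhds hbdlim
      (fun n => NN_nonneg _) h5
  refine ⟨hconc1, ?_⟩
  -- conclusion 2 : uniform convergence of all derivatives
  intro k
  obtain ⟨Ck, hCk0, hCk⟩ := Fk_bound hφ_smooth hφ_per₁ hφ_per₂ k
  rw [Metric.tendstoUniformly_iff]
  intro ε hε
  have hlim2 : Tendsto (fun n => Ck * nrm (fun x => qinf x - qn n x)) atTop (nhds 0) := by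
    have hs : Tendsto (fun n => Real.sqrt (NN (fun x => qn n x - qinf x))) atTop (nhds 0) :=
      (Real.continuous_sqrt.tendsto' 0 0 (by simp)).comp hconc1
    have hm := hs.const_mul Ck
    have e : (fun n => Ck * nrm (fun x => qinf x - qn n x))
        = fun n => Ck * Real.sqrt (NN (fun x => qn n x - qinf x)) := by
      funext n
      unfold nrm
      rw [NN_swap]
    rw [e]
    simpa using hm
  have hev := hlim2.eventually (gt_mem_nhds hε)
  filter_upwards [hev] with n hn t
  rw [Real.dist_eq]
  have e1 : iteratedDeriv k (PhiStar φ qinf) t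
      = ∫ x in Set.Ioc (0:ℝ) 1, Fk φ k (x,t) * qinf x := by
    rw [phiStar_iter hφ_smooth hφ_per₁ hφ_per₂ hSqinf k]
  have e2 : iteratedDeriv k (PhiStar φ (qn n)) t
      = ∫ x in Set.Ioc (0:ℝ) 1, Fk φ k (x,t) * qn n x := by
    rw [phiStar_iter hφ_smooth hφ_per₁ hφ_per₂ (hSqn n) k]
  rw [e1, e2]
  have hdiffint : (∫ x in Set.Ioc (0:ℝ) 1, Fk φ k (x,t) * qinf x)
      - (∫ x in Set.Ioc (0:ℝ) 1, Fk φ k (x,t) * qn n x)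
      = ∫ x in Set.Ioc (0:ℝ) 1, Fk φ k (x,t) * (qinf x - qn n x) := by
    have hcomb := int_comb hφ_smooth hφ_per₁ hφ_per₂ hSqinf (hSqn n) 1 (-1) k t
    have e : (∫ x in Set.Ioc (0:ℝ) 1, Fk φ k (x,t) * (qinf x - qn n x))
        = ∫ x in Set.Ioc (0:ℝ) 1, Fk φ k (x,t) * (1 * qinf x + (-1) * qn n x) := by
      congr 1; funext x; ring
    rw [e, hcomb]
    ring
  rw [hdiffint]
  calc |∫ x in Set.Ioc (0:ℝ) 1, Fk φ k (x,t) * (qinf x - qn n x)|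
      ≤ Ck * nrm (fun x => qinf x - qn n x) :=
        int_abs_bound hφ_smooth hφ_per₁ hφ_per₂ (hSqinf.sub (hSqn n)) hCk0 hCk t
    _ < ε := hn
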